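/- Let F be an inner product distribution on ℝ^d whose second moment matrix Δ = E[Y Y^⊤] (Y ∼ F) has rank d, and let X_1,…,X_n be i.i.d. F, collected as the rows of X ∈ ℝ^{n×d}. Then with probability at least 1 − 2d²/n², for every 1 ≤ i ≤ d, | λ_i(X X^⊤) − n λ_i(Δ) | ≤ 2d √(n log n); in particular, λ_i(X X^⊤) = Ω(n λ_i(Δ)) almost surely, and the d nonzero eigenvalues of P = X X^⊤ grow at least linearly in n. -/

import Mathlib

/-!
Each entry of `XᵀX = ∑ᵢ XᵢXᵢᵀ` is a sum of `n` independent terms bounded by `1` in absolute value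
with mean `Δ_ab`, so by Hoeffding it deviates from `n Δ_ab` by more than `u = 2 √(n log n)` with
probability at most `2 exp(-u² / 2n) = 2 / n²`; a union bound over the `d²` entries gives
`2d²/n²`. An entrywise bound `u` on `XᵀX - nΔ` bounds its quadratic form by `d u ‖v‖²`, hence,
by the Courant–Fischer min-max principle, `|λ_k(XᵀX) - n λ_k(Δ)| ≤ d u`; and `XXᵀ`, `XᵀX` have
the same nonzero eigenvalues. Since `∑ 2d²/n² < ∞`, Borel–Cantelli shows that almost surely the
bound holds for all large `n`, and as `√(n log n) = o(n)` while `λ_d(Δ) > 0` (`Δ` has rank `d`),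
`λ_k(XXᵀ) ≥ n λ_k(Δ) / 2 ≥ n λ_d(Δ) / 2` eventually.
-/

open MeasureTheory ProbabilityTheory Filter Matrix

noncomputable section

section
open scoped ComplexOrder

/-- The positive semidefinite square root of a positive semidefinite matrix, as defined in
the older Mathlib (removed since). -/
def Matrix.PosSemidef.sqrt {n : Type} [Fintype n] [DecidableEq n] {𝕜 : Type} [RCLike 𝕜]
    {A : Matrix n n 𝕜} (hA : A.PosSemidef) : Matrix n n 𝕜 :=
  hA.1.eigenvectorUnitary.1 * diagonal ((↑) ∘ (√·) ∘ hA.1.eigenvalues) *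
  (star hA.1.eigenvectorUnitary : Matrix n n 𝕜)

lemma Matrix.PosSemidef.posSemidef_sqrt {n : Type} [Fintype n] [DecidableEq n] {𝕜 : Type}
    [RCLike 𝕜] {A : Matrix n n 𝕜} (hA : A.PosSemidef) : PosSemidef hA.sqrt := by
  apply PosSemidef.mul_mul_conjTranspose_same
  refine posSemidef_diagonal_iff.mpr fun i ↦ ?_
  rw [Function.comp_apply, RCLike.nonneg_iff]
  constructor
  · simp only [RCLike.ofReal_re]
    exact Real.sqrt_nonneg _
  · simp only [RCLike.ofReal_im]

end

namespace RDPG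

/-- Euclidean norm of a vector in `ℝ^d`. -/
def rnorm {d : ℕ} (v : Fin d → ℝ) : ℝ := Real.sqrt (∑ i, v i ^ 2)

/-- Frobenius norm of a matrix. -/
def frob {ι κ : Type} [Fintype ι] [Fintype κ] (H : Matrix ι κ ℝ) : ℝ :=
  Real.sqrt (∑ i, ∑ j, H i j ^ 2)

/-- `2 → ∞` norm: the maximum Euclidean norm of the rows. -/
def twoInf {ι : Type} [Fintype ι] {d : ℕ} (H : Matrix ι (Fin d) ℝ) : ℝ :=
  ⨆ i, rnorm (H i)

/-- `|H| = (HᵀH)^{1/2}`, the matrix absolute value. -/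
def matAbs {ι : Type} [Fintype ι] [DecidableEq ι] (H : Matrix ι ι ℝ) : Matrix ι ι ℝ :=
  (Matrix.posSemidef_conjTranspose_mul_self H).sqrt

lemma matAbs_posSemidef {ι : Type} [Fintype ι] [DecidableEq ι] (H : Matrix ι ι ℝ) :
    (matAbs H).PosSemidef :=
  (Matrix.posSemidef_conjTranspose_mul_self H).posSemidef_sqrt

/-- The `k`-th largest (1-indexed) singular value of a square matrix `H`, i.e. the
`k`-th largest eigenvalue of `|H|`; junk value `0` when out of range.  For a positive
semidefinite matrix this is also the `k`-th largest eigenvalue. -/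
def sval {n : ℕ} (H : Matrix (Fin n) (Fin n) ℝ) (k : ℕ) : ℝ :=
  if h : k - 1 < n then
    (matAbs_posSemidef H).1.eigenvalues
      (Tuple.sort (fun j => - (matAbs_posSemidef H).1.eigenvalues j) ⟨k - 1, h⟩)
  else 0

/-- Spectral norm (largest singular value) of a rectangular matrix. -/
def spec {m n : ℕ} (H : Matrix (Fin m) (Fin n) ℝ) : ℝ := Real.sqrt (sval (Hᵀ * H) 1)

/-- `δ(H)`: the maximum row sum. -/
def deltaMax {n : ℕ} (H : Matrix (Fin n) (Fin n) ℝ) : ℝ := ⨆ i, ∑ j, H i j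

/-- `γ(H) = (σ_d(H) - σ_{d+1}(H))/δ(H)`. -/
def gammaGap {n : ℕ} (d : ℕ) (H : Matrix (Fin n) (Fin n) ℝ) : ℝ :=
  (sval H d - sval H (d + 1)) / deltaMax H

/-- Orthogonal matrix predicate. -/
def IsOrth {d : ℕ} (W : Matrix (Fin d) (Fin d) ℝ) : Prop := Wᵀ * W = 1

/-- Entrywise square root, used for `S^{1/2}` of a diagonal matrix `S`. -/
def diagSqrt {d : ℕ} (S : Matrix (Fin d) (Fin d) ℝ) : Matrix (Fin d) (Fin d) ℝ :=
  Matrix.of fun i j => Real.sqrt (S i j)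

/-- `S^{-1/2}` for a diagonal matrix `S`. -/
def diagInvSqrt {d : ℕ} (S : Matrix (Fin d) (Fin d) ℝ) : Matrix (Fin d) (Fin d) ℝ :=
  Matrix.of fun i j => if i = j then (Real.sqrt (S i i))⁻¹ else 0

/-- `(U, S)` is a top-`d` spectral pair for the symmetric matrix `M`:
`S` is diagonal with nonnegative nonincreasing diagonal entries which are the `d`
largest eigenvalues of `|M|`, and the columns of `U` are corresponding orthonormal
eigenvectors of `|M|`. -/
structure SpecPair {ι : Type} [Fintype ι] [DecidableEq ι] {d : ℕ} (M : Matrix ι ι ℝ)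
    (U : Matrix ι (Fin d) ℝ) (S : Matrix (Fin d) (Fin d) ℝ) : Prop where
  diag : ∀ i j, i ≠ j → S i j = 0
  nonneg : ∀ i, 0 ≤ S i i
  anti : ∀ i j : Fin d, i ≤ j → S j j ≤ S i i
  orth : Uᵀ * U = 1
  eig : matAbs M * U = U * S
  top : ∀ (v : ι → ℝ) (t : ℝ), v ≠ 0 → matAbs M *ᵥ v = t • v → Uᵀ *ᵥ v = 0 →
    ∀ i, t ≤ S i i

/-- The adjacency spectral embedding associated to a top-`d` spectral pair. -/
def ase {ι : Type} [Fintype ι] {d : ℕ} (U : Matrix ι (Fin d) ℝ)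
    (S : Matrix (Fin d) (Fin d) ℝ) : Matrix ι (Fin d) ℝ :=
  U * diagSqrt S

/-- The normalized Laplacian `L(A) = D^{-1/2} A D^{-1/2}`, `D_{ii} = ∑_{j ≠ i} A_{ij}`. -/
def lap {n : ℕ} (A : Matrix (Fin n) (Fin n) ℝ) : Matrix (Fin n) (Fin n) ℝ :=
  Matrix.of fun i j =>
    A i j / (Real.sqrt (∑ k ∈ Finset.univ.erase i, A i k) *
      Real.sqrt (∑ k ∈ Finset.univ.erase j, A j k))

/-- `A` is (the adjacency matrix of) a random dot product graph with **fixed** latent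
position matrix `X`: `A` is symmetric, hollow, `{0,1}`-valued, with the entries
`A_{ij}`, `i < j`, independent Bernoulli `⟨X_i, X_j⟩` random variables (the last two
conditions being encoded through the product formula over finite families of edges). -/
def IsRDPGf {Ω : Type} [MeasurableSpace Ω] (μ : Measure Ω) {n d : ℕ}
    (X : Matrix (Fin n) (Fin d) ℝ) (A : Ω → Matrix (Fin n) (Fin n) ℝ) : Prop :=
  (∀ i j : Fin n, X i ⬝ᵥ X j ∈ Set.Icc (0:ℝ) 1) ∧
  (∀ ω, (A ω)ᵀ = A ω) ∧
  (∀ ω i, A ω i i = 0) ∧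
  (∀ ω i j, A ω i j = 0 ∨ A ω i j = 1) ∧
  (∀ i j, Measurable fun ω => A ω i j) ∧
  (∀ E : Finset (Fin n × Fin n), (∀ p ∈ E, p.1 < p.2) →
    μ {ω | ∀ p ∈ E, A ω p.1 p.2 = 1} = ENNReal.ofReal (∏ p ∈ E, X p.1 ⬝ᵥ X p.2))

/-- `(A, X)` is a random dot product graph with i.i.d. latent positions distributed as
`F`: the rows of `X` are i.i.d. with law `F` and, conditional on `X`, `A` is symmetric,
hollow, `{0,1}`-valued with independent Bernoulli `⟨X_i, X_j⟩` edges (encoded via the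
product formula over finite edge families and measurable rectangles in `X`). -/
def IsRDPGrand {Ω : Type} [MeasurableSpace Ω] (μ : Measure Ω) {n d : ℕ}
    (F : Measure (Fin d → ℝ)) (X : Ω → Matrix (Fin n) (Fin d) ℝ)
    (A : Ω → Matrix (Fin n) (Fin n) ℝ) : Prop :=
  (∀ i, Measurable fun ω => X ω i) ∧
  (∀ S : Fin n → Set (Fin d → ℝ), (∀ i, MeasurableSet (S i)) →
    μ {ω | ∀ i, X ω i ∈ S i} = ∏ i, F (S i)) ∧
  (∀ ω, (A ω)ᵀ = A ω) ∧
  (∀ ω i, A ω i i = 0) ∧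
  (∀ ω i j, A ω i j = 0 ∨ A ω i j = 1) ∧
  (∀ i j, Measurable fun ω => A ω i j) ∧
  (∀ E : Finset (Fin n × Fin n), (∀ p ∈ E, p.1 < p.2) →
    ∀ S : Fin n → Set (Fin d → ℝ), (∀ i, MeasurableSet (S i)) →
      μ ({ω | ∀ p ∈ E, A ω p.1 p.2 = 1} ∩ {ω | ∀ i, X ω i ∈ S i}) =
        ENNReal.ofReal (∫ ω in {ω | ∀ i, X ω i ∈ S i},
          (∏ p ∈ E, X ω p.1 ⬝ᵥ X ω p.2) ∂μ))

/-- `F` is a `d`-dimensional inner product distribution with support (contained in) `s`: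
`F` is a probability measure giving full mass to `s`, and `x ⬝ᵥ y ∈ [0,1]` for all
`x, y ∈ s`. -/
def InnerProdDist {d : ℕ} (F : Measure (Fin d → ℝ)) (s : Set (Fin d → ℝ)) : Prop :=
  IsProbabilityMeasure F ∧ F sᶜ = 0 ∧ ∀ x ∈ s, ∀ y ∈ s, x ⬝ᵥ y ∈ Set.Icc (0:ℝ) 1

/-- Second moment matrix `Δ = E[X₁ X₁ᵀ]` of a distribution `F` on `ℝ^d`. -/
def smm {d : ℕ} (F : Measure (Fin d → ℝ)) : Matrix (Fin d) (Fin d) ℝ :=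
  Matrix.of fun a b => ∫ x, x a * x b ∂F

/-- Mean vector `μ = E[X₁]` of a distribution `F` on `ℝ^d`. -/
def meanVec {d : ℕ} (F : Measure (Fin d → ℝ)) : Fin d → ℝ := fun a => ∫ x, x a ∂F

/-- `Φ(z, Σ)`: the cdf at `z` of the centered `d`-dimensional Gaussian with
covariance matrix `Σ` (defined via its Lebesgue density). -/
def gaussCDF {d : ℕ} (Sg : Matrix (Fin d) (Fin d) ℝ) (z : Fin d → ℝ) : ℝ :=
  ∫ x in {x : Fin d → ℝ | ∀ i, x i ≤ z i},
    (Real.sqrt ((2 * Real.pi) ^ d * Sg.det))⁻¹ * Real.exp (-(x ⬝ᵥ (Sg⁻¹ *ᵥ x)) / 2)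

/-- The covariance `Σ(x) = Δ⁻¹ E[(xᵀX₁ - (xᵀX₁)²) X₁X₁ᵀ] Δ⁻¹` appearing in the
central limit theorem for the adjacency spectral embedding. -/
def aseCov {d : ℕ} (F : Measure (Fin d → ℝ)) (x : Fin d → ℝ) :
    Matrix (Fin d) (Fin d) ℝ :=
  (smm F)⁻¹ * (Matrix.of fun a b => ∫ y, (x ⬝ᵥ y - (x ⬝ᵥ y) ^ 2) * (y a * y b) ∂F) *
    (smm F)⁻¹

/-- `Δ̃ = E[X₁X₁ᵀ/(X₁ᵀμ)]` appearing in the Laplacian spectral embedding CLT. -/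
def lseDelta {d : ℕ} (F : Measure (Fin d → ℝ)) : Matrix (Fin d) (Fin d) ℝ :=
  Matrix.of fun a b => ∫ y, (y a * y b) / (y ⬝ᵥ meanVec F) ∂F

/-- The covariance `Σ̃(x)` appearing in the Laplacian spectral embedding CLT. -/
def lseCov {d : ℕ} (F : Measure (Fin d → ℝ)) (x : Fin d → ℝ) :
    Matrix (Fin d) (Fin d) ℝ :=
  Matrix.of fun a b => ∫ y,
    (((lseDelta F)⁻¹ *ᵥ y) a / (y ⬝ᵥ meanVec F) - x a / (2 * (x ⬝ᵥ meanVec F))) *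
      ((((lseDelta F)⁻¹ *ᵥ y) b / (y ⬝ᵥ meanVec F) - x b / (2 * (x ⬝ᵥ meanVec F))) *
        ((x ⬝ᵥ y - (x ⬝ᵥ y) ^ 2) / (x ⬝ᵥ meanVec F))) ∂F

end RDPG

open scoped RealInnerProductSpace

lemma Submodule.exists_mem_inf_ne_zero_of_finrank_lt {K V : Type*} [DivisionRing K] [AddCommGroup V]
    [Module K V] [FiniteDimensional K V] (s t : Submodule K V)
    (h : Module.finrank K V < Module.finrank K s + Module.finrank K t) :
    ∃ v ∈ s, v ∈ t ∧ v ≠ 0 := by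
  have hsum := Submodule.finrank_sup_add_finrank_inf_eq s t
  have hsup := (s ⊔ t).finrank_le
  obtain ⟨v, hv, hv0⟩ := Submodule.exists_mem_ne_zero_of_ne_bot (p := s ⊓ t) fun hbot => by
    rw [hbot, finrank_bot] at hsum
    omega
  exact ⟨v, hv.1, hv.2, hv0⟩

lemma mul_inner_le_norm_sq_of_mul_norm_sq_le {E : Type*} [NormedAddCommGroup E]
    [InnerProductSpace ℝ E] {w y : E} {t : ℝ} (ht : 0 ≤ t) (h : t * ‖w‖ ^ 2 ≤ ⟪w, y⟫) :
    t * ⟪w, y⟫ ≤ ‖y‖ ^ 2 := by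
  have hcs := real_inner_le_norm w y
  rcases (norm_nonneg w).eq_or_lt with hw | hw
  · rw [norm_eq_zero.1 hw.symm, inner_zero_left, mul_zero]
    positivity
  have hty : t * ‖w‖ ≤ ‖y‖ := le_of_mul_le_mul_left (by nlinarith) hw
  calc t * ⟪w, y⟫ ≤ t * ‖w‖ * ‖y‖ := by rw [mul_assoc]; exact mul_le_mul_of_nonneg_left hcs ht
    _ ≤ ‖y‖ ^ 2 := by rw [sq]; exact mul_le_mul_of_nonneg_right hty (norm_nonneg y)

lemma abs_mul_le_dotProduct_self {ι : Type*} [Fintype ι] (x : ι → ℝ) (a b : ι) :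
    |x a * x b| ≤ x ⬝ᵥ x := by
  have hsq : ∀ c, x c ^ 2 ≤ x ⬝ᵥ x := fun c => by
    simpa [dotProduct, sq] using Finset.single_le_sum (f := fun j => x j * x j)
      (fun j _ => mul_self_nonneg (x j)) (Finset.mem_univ c)
  refine abs_le_of_sq_le_sq ?_ ((sq_nonneg _).trans (hsq a))
  rw [mul_pow, sq (x ⬝ᵥ x)]
  exact mul_le_mul (hsq a) (hsq b) (sq_nonneg _) ((sq_nonneg _).trans (hsq a))

lemma Matrix.inner_toEuclideanLin_transpose {n d : ℕ} (X : Matrix (Fin n) (Fin d) ℝ)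
    (w : EuclideanSpace ℝ (Fin n)) (v : EuclideanSpace ℝ (Fin d)) :
    ⟪Xᵀ.toEuclideanLin w, v⟫ = ⟪w, X.toEuclideanLin v⟫ := by
  simp only [EuclideanSpace.inner_eq_star_dotProduct, toLpLin_apply, star_trivial,
    dotProduct_mulVec, vecMul_transpose]

lemma Matrix.abs_inner_toEuclideanLin_self_le {m : ℕ} {M : Matrix (Fin m) (Fin m) ℝ} {u : ℝ}
    (hM : ∀ a b, |M a b| ≤ u) (v : EuclideanSpace ℝ (Fin m)) :
    |⟪v, M.toEuclideanLin v⟫| ≤ m * u * ‖v‖ ^ 2 := by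
  rcases Nat.eq_zero_or_pos m with rfl | hm
  · simp [Subsingleton.elim v 0]
  have hu : 0 ≤ u := (abs_nonneg _).trans (hM ⟨0, hm⟩ ⟨0, hm⟩)
  calc |⟪v, M.toEuclideanLin v⟫| = |∑ a, ∑ b, v a * M a b * v b| := by
        simp only [EuclideanSpace.inner_eq_star_dotProduct, toLpLin_apply, star_trivial,
          dotProduct, mulVec, Finset.sum_mul]
        exact congrArg _ (Finset.sum_congr rfl fun a _ => Finset.sum_congr rfl fun b _ => by ring)
    _ ≤ ∑ a, ∑ b, |v a| * u * |v b| := by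
        refine (Finset.abs_sum_le_sum_abs _ _).trans (Finset.sum_le_sum fun a _ => ?_)
        refine (Finset.abs_sum_le_sum_abs _ _).trans (Finset.sum_le_sum fun b _ => ?_)
        rw [abs_mul, abs_mul]
        gcongr
        exact hM a b
    _ = u * (∑ a, |v a|) ^ 2 := by
        rw [sq, Finset.sum_mul_sum, Finset.mul_sum]
        refine Finset.sum_congr rfl fun a _ => ?_
        rw [Finset.mul_sum]
        exact Finset.sum_congr rfl fun b _ => by ring
    _ ≤ u * (m * ∑ a, |v a| ^ 2) := by
        gcongr
        simpa using sq_sum_le_card_mul_sum_sq (s := Finset.univ) (f := fun a => |v a|)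
    _ = m * u * ‖v‖ ^ 2 := by
        rw [EuclideanSpace.norm_sq_eq]
        simp only [Real.norm_eq_abs]
        ring

namespace Matrix.IsHermitian

variable {m : ℕ} {H A B : Matrix (Fin m) (Fin m) ℝ}

def sortedEig (hH : H.IsHermitian) (k : Fin m) : ℝ :=
  hH.eigenvalues (Tuple.sort (fun j => -hH.eigenvalues j) k)

def sortedEigenbasis (hH : H.IsHermitian) : OrthonormalBasis (Fin m) ℝ (EuclideanSpace ℝ (Fin m)) :=
  hH.eigenvectorBasis.reindex (Tuple.sort fun j => -hH.eigenvalues j).symm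

lemma sortedEig_antitone (hH : H.IsHermitian) : Antitone hH.sortedEig := fun k l hkl => by
  simpa [sortedEig] using Tuple.monotone_sort (fun j => -hH.eigenvalues j) hkl

lemma toEuclideanLin_sortedEigenbasis (hH : H.IsHermitian) (k : Fin m) :
    H.toEuclideanLin (hH.sortedEigenbasis k) = hH.sortedEig k • hH.sortedEigenbasis k := by
  apply WithLp.ofLp_injective
  simp [sortedEigenbasis, sortedEig, toLpLin_apply, mulVec_eigenvectorBasis]

lemma inner_sortedEigenbasis_toEuclideanLin (hH : H.IsHermitian) (k : Fin m)
    (v : EuclideanSpace ℝ (Fin m)) :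
    ⟪hH.sortedEigenbasis k, H.toEuclideanLin v⟫ = hH.sortedEig k * ⟪hH.sortedEigenbasis k, v⟫ := by
  rw [← isSymmetric_toEuclideanLin_iff.mpr hH, toEuclideanLin_sortedEigenbasis,
    real_inner_smul_left]

lemma inner_toEuclideanLin_self_eq_sum (hH : H.IsHermitian) (v : EuclideanSpace ℝ (Fin m)) :
    ⟪v, H.toEuclideanLin v⟫ = ∑ j, hH.sortedEig j * ⟪hH.sortedEigenbasis j, v⟫ ^ 2 := by
  rw [← hH.sortedEigenbasis.sum_inner_mul_inner]
  refine Finset.sum_congr rfl fun j _ => ?_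
  rw [inner_sortedEigenbasis_toEuclideanLin, real_inner_comm]
  ring

lemma inner_toEuclideanLin_self_le (hH : H.IsHermitian) {k : Fin m} {v : EuclideanSpace ℝ (Fin m)}
    (hv : ∀ j < k, ⟪hH.sortedEigenbasis j, v⟫ = 0) :
    ⟪v, H.toEuclideanLin v⟫ ≤ hH.sortedEig k * ‖v‖ ^ 2 := by
  rw [hH.inner_toEuclideanLin_self_eq_sum, ← hH.sortedEigenbasis.sum_sq_inner_right,
    Finset.mul_sum]
  refine Finset.sum_le_sum fun j _ => ?_
  rcases lt_or_ge j k with hjk | hkj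
  · simp [hv j hjk]
  · exact mul_le_mul_of_nonneg_right (hH.sortedEig_antitone hkj) (sq_nonneg _)

lemma le_inner_toEuclideanLin_self (hH : H.IsHermitian) {k : Fin m} {v : EuclideanSpace ℝ (Fin m)}
    (hv : ∀ j, k < j → ⟪hH.sortedEigenbasis j, v⟫ = 0) :
    hH.sortedEig k * ‖v‖ ^ 2 ≤ ⟪v, H.toEuclideanLin v⟫ := by
  rw [hH.inner_toEuclideanLin_self_eq_sum, ← hH.sortedEigenbasis.sum_sq_inner_right,
    Finset.mul_sum]
  refine Finset.sum_le_sum fun j _ => ?_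
  rcases lt_or_ge k j with hkj | hjk
  · simp [hv j hkj]
  · exact mul_le_mul_of_nonneg_right (hH.sortedEig_antitone hjk) (sq_nonneg _)

def spanSortedEigenbasis (hH : H.IsHermitian) (s : Finset (Fin m)) :
    Submodule ℝ (EuclideanSpace ℝ (Fin m)) :=
  Submodule.span ℝ (hH.sortedEigenbasis '' s)

lemma finrank_spanSortedEigenbasis (hH : H.IsHermitian) (s : Finset (Fin m)) :
    Module.finrank ℝ (hH.spanSortedEigenbasis s) = s.card := by
  have hli : LinearIndependent ℝ fun i : (s : Set (Fin m)) => hH.sortedEigenbasis i :=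
    hH.sortedEigenbasis.orthonormal.linearIndependent.comp _ Subtype.val_injective
  rw [spanSortedEigenbasis, Set.image_eq_range, finrank_span_eq_card hli]
  simp

lemma inner_eq_zero_of_mem_spanSortedEigenbasis (hH : H.IsHermitian) {s : Finset (Fin m)}
    {v : EuclideanSpace ℝ (Fin m)} (hv : v ∈ hH.spanSortedEigenbasis s) {j : Fin m} (hj : j ∉ s) :
    ⟪hH.sortedEigenbasis j, v⟫ = 0 := by
  induction hv using Submodule.span_induction with
  | mem x hx =>
    obtain ⟨i, hi, rfl⟩ := hx
    exact hH.sortedEigenbasis.orthonormal.2 fun hji => hj (hji ▸ hi)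
  | zero => exact inner_zero_right _
  | add x y _ _ hx hy => rw [inner_add_right, hx, hy, add_zero]
  | smul c x _ hx => rw [real_inner_smul_right, hx, mul_zero]

lemma le_sortedEig_of_le_inner (hH : H.IsHermitian) (k : Fin m)
    {V : Submodule ℝ (EuclideanSpace ℝ (Fin m))} (hV : (k : ℕ) < Module.finrank ℝ V) {t : ℝ}
    (h : ∀ v ∈ V, t * ‖v‖ ^ 2 ≤ ⟪v, H.toEuclideanLin v⟫) : t ≤ hH.sortedEig k := by
  obtain ⟨v, hvV, hvk, hv0⟩ :=
    V.exists_mem_inf_ne_zero_of_finrank_lt (hH.spanSortedEigenbasis (.Ici k))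
    (by rw [finrank_euclideanSpace_fin, finrank_spanSortedEigenbasis, Fin.card_Ici]; omega)
  have hle := hH.inner_toEuclideanLin_self_le fun j hj =>
    hH.inner_eq_zero_of_mem_spanSortedEigenbasis hvk (by simpa using hj)
  exact le_of_mul_le_mul_right ((h v hvV).trans hle) (pow_pos (norm_pos_iff.2 hv0) 2)

lemma sortedEig_le_of_inner_le (hH : H.IsHermitian) (k : Fin m)
    {V : Submodule ℝ (EuclideanSpace ℝ (Fin m))} (hV : m ≤ k + Module.finrank ℝ V) {t : ℝ}
    (h : ∀ v ∈ V, ⟪v, H.toEuclideanLin v⟫ ≤ t * ‖v‖ ^ 2) : hH.sortedEig k ≤ t := by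
  obtain ⟨v, hvV, hvk, hv0⟩ :=
    V.exists_mem_inf_ne_zero_of_finrank_lt (hH.spanSortedEigenbasis (.Iic k))
    (by rw [finrank_euclideanSpace_fin, finrank_spanSortedEigenbasis, Fin.card_Iic]; omega)
  have hle := hH.le_inner_toEuclideanLin_self fun j hj =>
    hH.inner_eq_zero_of_mem_spanSortedEigenbasis hvk (by simpa using hj)
  exact le_of_mul_le_mul_right (hle.trans (h v hvV)) (pow_pos (norm_pos_iff.2 hv0) 2)

lemma abs_sortedEig_sub_mul_le (hA : A.IsHermitian) (hB : B.IsHermitian) {c r : ℝ} (hc : 0 ≤ c)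
    (h : ∀ v, |⟪v, A.toEuclideanLin v⟫ - c * ⟪v, B.toEuclideanLin v⟫| ≤ r * ‖v‖ ^ 2)
    (k : Fin m) : |hA.sortedEig k - c * hB.sortedEig k| ≤ r := by
  rw [abs_sub_le_iff]
  constructor
  · have := hA.sortedEig_le_of_inner_le k (V := hB.spanSortedEigenbasis (.Ici k))
      (by rw [finrank_spanSortedEigenbasis, Fin.card_Ici]; omega) (t := c * hB.sortedEig k + r)
      fun v hv => by
        have hBv := hB.inner_toEuclideanLin_self_le fun j hj =>
          hB.inner_eq_zero_of_mem_spanSortedEigenbasis hv (by simpa using hj)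
        nlinarith [(abs_le.1 (h v)).2, mul_le_mul_of_nonneg_left hBv hc]
    linarith
  · have := hA.le_sortedEig_of_le_inner k (V := hB.spanSortedEigenbasis (.Iic k))
      (by rw [finrank_spanSortedEigenbasis, Fin.card_Iic]; omega) (t := c * hB.sortedEig k - r)
      fun v hv => by
        have hBv := hB.le_inner_toEuclideanLin_self fun j hj =>
          hB.inner_eq_zero_of_mem_spanSortedEigenbasis hv (by simpa using hj)
        nlinarith [(abs_le.1 (h v)).1, mul_le_mul_of_nonneg_left hBv hc]
    linarith

end Matrix.IsHermitian

lemma Matrix.PosSemidef.sortedEig_pos_of_rank_eq {m : ℕ} {H : Matrix (Fin m) (Fin m) ℝ}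
    (hP : H.PosSemidef) (hrank : H.rank = m) (k : Fin m) : 0 < hP.1.sortedEig k := by
  refine (hP.eigenvalues_nonneg _).lt_of_ne' fun h0 => ?_
  have := Fintype.card_subtype_lt (p := fun i => hP.1.eigenvalues i ≠ 0) (not_not.2 h0)
  rw [← hP.1.rank_eq_card_non_zero_eigs, hrank, Fintype.card_fin] at this
  exact lt_irrefl _ this

lemma Matrix.exists_lt_and_sortedEig_le_of_pos {n d : ℕ} (X : Matrix (Fin n) (Fin d) ℝ)
    (hP : (X * Xᵀ).IsHermitian) (hQ : (Xᵀ * X).IsHermitian) (k : Fin n)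
    (ht : 0 < hP.sortedEig k) : ∃ hk : (k : ℕ) < d, hP.sortedEig k ≤ hQ.sortedEig ⟨k, hk⟩ := by
  -- `Xᵀ` is injective on the span `W` of the top `k + 1` eigenvectors of `X * Xᵀ`, and by
  -- Cauchy–Schwarz the Rayleigh quotient of `Xᵀ * X` on `Xᵀ W` is still at least `t`.
  set t := hP.sortedEig k
  set P := (X * Xᵀ).toEuclideanLin
  set L := Xᵀ.toEuclideanLin
  set W := hP.spanSortedEigenbasis (.Iic k)
  have hLL : ∀ w y, ⟪L w, L y⟫ = ⟪w, P y⟫ := fun w y => by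
    rw [inner_toEuclideanLin_transpose]
    simp only [P, L, toLpLin_mul_same, LinearMap.comp_apply]
  have hW : ∀ w ∈ W, t * ‖w‖ ^ 2 ≤ ⟪w, P w⟫ := fun w hw =>
    hP.le_inner_toEuclideanLin_self fun j hj =>
      hP.inner_eq_zero_of_mem_spanSortedEigenbasis hw (by simpa using hj)
  have hinj : Function.Injective (L.domRestrict W) := by
    rw [← LinearMap.ker_eq_bot, LinearMap.ker_eq_bot']
    intro w hw
    have h := hW w w.2
    rw [← hLL, real_inner_self_eq_norm_sq, ← LinearMap.domRestrict_apply, hw, norm_zero] at h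
    have : ‖(w : EuclideanSpace ℝ (Fin n))‖ ^ 2 ≤ 0 :=
      nonpos_of_mul_nonpos_right (by simpa using h) ht
    exact Subtype.ext (by simpa using this)
  have hdim : Module.finrank ℝ (W.map L) = k + 1 := by
    rw [← LinearMap.range_domRestrict, LinearMap.finrank_range_of_inj hinj,
      hP.finrank_spanSortedEigenbasis, Fin.card_Iic]
  have hk : (k : ℕ) < d := by
    have := (W.map L).finrank_le
    rw [finrank_euclideanSpace_fin] at this
    omega
  refine ⟨hk, hQ.le_sortedEig_of_le_inner _ (V := W.map L) (by simp [hdim]) ?_⟩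
  rintro _ ⟨w, hw, rfl⟩
  have hQL : (Xᵀ * X).toEuclideanLin (L w) = L (P w) := by
    simp only [P, L, toLpLin_mul_same, LinearMap.comp_apply]
  rw [hQL, ← real_inner_self_eq_norm_sq, hLL, hLL,
    ← isSymmetric_toEuclideanLin_iff.mpr hP w (P w), real_inner_self_eq_norm_sq]
  exact mul_inner_le_norm_sq_of_mul_norm_sq_le ht.le (hW w hw)

lemma ProbabilityTheory.measureReal_abs_sum_sub_integral_ge_le {Ω ι : Type*} [MeasurableSpace Ω]
    {μ : Measure Ω} [IsProbabilityMeasure μ] [Fintype ι] {Z : ι → Ω → ℝ} (hind : iIndepFun Z μ)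
    (hmeas : ∀ i, Measurable (Z i)) (hb : ∀ i, ∀ᵐ ω ∂μ, |Z i ω| ≤ 1) {u : ℝ} (hu : 0 ≤ u) :
    μ.real {ω | u ≤ |∑ i, (Z i ω - μ[Z i])|} ≤ 2 * Real.exp (-u ^ 2 / (2 * Fintype.card ι)) := by
  have hsub : ∀ i, HasSubgaussianMGF (fun ω => Z i ω - μ[Z i]) 1 μ := fun i => by
    have := hasSubgaussianMGF_of_mem_Icc (hmeas i).aemeasurable ((hb i).mono fun ω h => abs_le.1 h)
    norm_num at this
    exact this
  have hind' : iIndepFun (fun i ω => Z i ω - μ[Z i]) μ :=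
    hind.comp _ fun i => measurable_id.sub_const _
  have hup := HasSubgaussianMGF.measure_sum_ge_le_of_iIndepFun hind' (s := .univ)
    (fun i _ => hsub i) hu
  have hdown := HasSubgaussianMGF.measure_sum_ge_le_of_iIndepFun
    (hind'.comp (fun _ x => -x) fun _ => measurable_neg) (s := .univ) (fun i _ => (hsub i).neg) hu
  simp only [Finset.sum_const, Finset.card_univ, nsmul_eq_mul, mul_one, NNReal.coe_natCast,
    Function.comp_apply] at hup hdown
  calc μ.real {ω | u ≤ |∑ i, (Z i ω - μ[Z i])|}
      ≤ μ.real ({ω | u ≤ ∑ i, (Z i ω - μ[Z i])} ∪ {ω | u ≤ ∑ i, -(Z i ω - μ[Z i])}) := by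
        refine measureReal_mono (fun ω hω => ?_)
        simp only [Set.mem_ofPred_eq, Set.mem_union, Finset.sum_neg_distrib] at hω ⊢
        exact le_abs'.1 hω |>.symm.imp id fun h => by linarith
    _ ≤ _ := (measureReal_union_le _ _).trans (by linarith)

lemma MeasureTheory.ae_eventually_notMem_of_measure_le_div_sq {Ω : Type*} [MeasurableSpace Ω]
    {μ : Measure Ω} {s : ℕ → Set Ω} (C : ℝ) (h : ∀ n, μ (s n) ≤ ENNReal.ofReal (C / n ^ 2)) :
    ∀ᵐ ω ∂μ, ∀ᶠ n in atTop, ω ∉ s n := by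
  have hC : Summable fun n : ℕ => C / n ^ 2 :=
    ((Real.summable_nat_pow_inv.2 one_lt_two).mul_left C).congr fun n => by rw [div_eq_mul_inv]
  exact ae_eventually_notMem (ne_top_of_le_ne_top hC.tsum_ofReal_ne_top (ENNReal.tsum_le_tsum h))

lemma MeasureTheory.ofReal_one_sub_le_measure {Ω : Type*} [MeasurableSpace Ω] {μ : Measure Ω}
    [IsProbabilityMeasure μ] {s t : Set Ω} {p : ℝ} (hp : 0 ≤ p) (hs : μ s ≤ ENNReal.ofReal p)
    (hst : sᶜ ⊆ t) : ENNReal.ofReal (1 - p) ≤ μ t :=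
  calc ENNReal.ofReal (1 - p) = 1 - ENNReal.ofReal p := by
        rw [ENNReal.ofReal_sub _ hp, ENNReal.ofReal_one]
    _ ≤ 1 - μ s := tsub_le_tsub_left hs 1
    _ ≤ μ sᶜ := tsub_le_iff_left.2 <| by
        simpa [Set.union_compl_self] using measure_union_le (μ := μ) s sᶜ
    _ ≤ μ t := measure_mono hst

lemma eventually_mul_sqrt_mul_log_le (c : ℝ) {ε : ℝ} (hε : 0 < ε) :
    ∀ᶠ n : ℕ in atTop, c * √(n * Real.log n) ≤ ε * n := by
  set δ := ε ^ 2 / (c ^ 2 + 1)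
  have hcδ : c ^ 2 * δ ≤ ε ^ 2 := by
    rw [mul_div_assoc', div_le_iff₀ (by positivity)]
    nlinarith [sq_nonneg ε]
  filter_upwards [tendsto_natCast_atTop_atTop.eventually
    (Real.isLittleO_log_id_atTop.bound (by positivity : 0 < δ))] with n hn
  simp only [Real.norm_eq_abs, id, Nat.abs_cast] at hn
  have hlog : (n : ℝ) * Real.log n ≤ δ * n ^ 2 := by
    nlinarith [le_abs_self (Real.log n), (n.cast_nonneg : (0 : ℝ) ≤ n)]
  calc c * √(n * Real.log n) ≤ √(c ^ 2 * (n * Real.log n)) := by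
        rw [Real.sqrt_mul (sq_nonneg c), Real.sqrt_sq_eq_abs]
        exact mul_le_mul_of_nonneg_right (le_abs_self c) (Real.sqrt_nonneg _)
    _ ≤ √((ε * n) ^ 2) := Real.sqrt_le_sqrt (by
        nlinarith [mul_le_mul_of_nonneg_left hlog (sq_nonneg c),
          mul_le_mul_of_nonneg_right hcδ (sq_nonneg (n : ℝ))])
    _ = ε * n := Real.sqrt_sq (by positivity)

namespace RDPG

lemma sval_nonneg {m : ℕ} (H : Matrix (Fin m) (Fin m) ℝ) (k : ℕ) : 0 ≤ sval H k := by
  unfold sval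
  split_ifs
  · exact (matAbs_posSemidef H).eigenvalues_nonneg _
  · exact le_rfl

lemma matAbs_of_posSemidef {m : ℕ} {H : Matrix (Fin m) (Fin m) ℝ} (hP : H.PosSemidef) :
    matAbs H = H := by
  have hHH := Matrix.posSemidef_conjTranspose_mul_self H
  have hcfc : matAbs H = cfc Real.sqrt (Hᴴ * H) := by
    rw [hHH.1.cfc_eq, Matrix.IsHermitian.cfc, Unitary.conjStarAlgAut_apply]
    rfl
  have hsq : Hᴴ * H = H ^ 2 := by rw [pow_two, hP.1.eq]
  rw [hcfc, hsq, ← cfc_comp_pow (hf := Real.continuous_sqrt.continuousOn) (ha := hP.1.isSelfAdjoint)]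
  conv_rhs => rw [← cfc_id' ℝ H (ha := hP.1.isSelfAdjoint)]
  apply cfc_congr
  intro x hx
  rw [hP.1.spectrum_real_eq_range_eigenvalues] at hx
  obtain ⟨i, rfl⟩ := hx
  exact Real.sqrt_sq (hP.eigenvalues_nonneg i)

lemma sval_eq_sortedEig {m : ℕ} {H : Matrix (Fin m) (Fin m) ℝ} (hP : H.PosSemidef) {k : ℕ}
    (hk : k - 1 < m) : sval H k = hP.1.sortedEig ⟨k - 1, hk⟩ := by
  have key : ∀ (A : Matrix (Fin m) (Fin m) ℝ) (hA : A.IsHermitian), A = H →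
      hA.sortedEig ⟨k - 1, hk⟩ = hP.1.sortedEig ⟨k - 1, hk⟩ := by
    rintro _ _ rfl
    rfl
  rw [sval, dif_pos hk]
  exact key _ _ (matAbs_of_posSemidef hP)

lemma sval_mul_transpose_le_sval_transpose_mul {n d : ℕ} (X : Matrix (Fin n) (Fin d) ℝ) (k : ℕ) :
    sval (X * Xᵀ) k ≤ sval (Xᵀ * X) k := by
  have hP : (X * Xᵀ).PosSemidef := by simpa using posSemidef_self_mul_conjTranspose X
  have hQ : (Xᵀ * X).PosSemidef := by simpa using posSemidef_conjTranspose_mul_self X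
  by_cases hkn : k - 1 < n
  swap
  · rw [sval, dif_neg hkn]
    exact sval_nonneg _ _
  rw [sval_eq_sortedEig hP hkn]
  rcases le_or_gt (hP.1.sortedEig ⟨k - 1, hkn⟩) 0 with ht | ht
  · exact ht.trans (sval_nonneg _ _)
  obtain ⟨hkd, hle⟩ := X.exists_lt_and_sortedEig_le_of_pos hP.1 hQ.1 _ ht
  rwa [sval_eq_sortedEig hQ hkd]

lemma sval_mul_transpose_eq_sval_transpose_mul {n d : ℕ} (X : Matrix (Fin n) (Fin d) ℝ) (k : ℕ) :
    sval (X * Xᵀ) k = sval (Xᵀ * X) k :=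
  (sval_mul_transpose_le_sval_transpose_mul X k).antisymm
    (by simpa using sval_mul_transpose_le_sval_transpose_mul Xᵀ k)

lemma abs_sval_mul_transpose_sub_le {n d : ℕ} (Y : Matrix (Fin n) (Fin d) ℝ)
    {Δ : Matrix (Fin d) (Fin d) ℝ} (hΔ : Δ.PosSemidef) {u : ℝ}
    (h : ∀ a b, |(Yᵀ * Y) a b - n * Δ a b| ≤ u) {k : ℕ} (hk : k - 1 < d) :
    |sval (Y * Yᵀ) k - n * sval Δ k| ≤ d * u := by
  have hQ : (Yᵀ * Y).PosSemidef := by simpa using posSemidef_conjTranspose_mul_self Y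
  rw [sval_mul_transpose_eq_sval_transpose_mul, sval_eq_sortedEig hQ hk, sval_eq_sortedEig hΔ hk]
  refine hQ.1.abs_sortedEig_sub_mul_le hΔ.1 n.cast_nonneg (fun v => ?_) _
  have := abs_inner_toEuclideanLin_self_le (M := Yᵀ * Y - (n : ℝ) • Δ) (fun a b => h a b) v
  simpa [inner_sub_right, real_inner_smul_right, mul_assoc] using this

lemma exists_pos_le_sval_of_rank_eq {m : ℕ} {H : Matrix (Fin m) (Fin m) ℝ} (hP : H.PosSemidef)
    (hrank : H.rank = m) : ∃ l > 0, ∀ k, 1 ≤ k → k ≤ m → l ≤ sval H k := by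
  rcases Nat.eq_zero_or_pos m with rfl | hm
  · exact ⟨1, one_pos, fun k hk1 hk => by omega⟩
  refine ⟨sval H m, ?_, fun k hk1 hkm => ?_⟩
  · rw [sval_eq_sortedEig hP (by omega)]
    exact hP.sortedEig_pos_of_rank_eq hrank _
  · rw [sval_eq_sortedEig hP (by omega), sval_eq_sortedEig hP (by omega)]
    exact hP.1.sortedEig_antitone (Fin.mk_le_mk.2 (by omega))

namespace InnerProdDist

variable {d : ℕ} {F : Measure (Fin d → ℝ)} {s : Set (Fin d → ℝ)}

lemma ae_abs_mul_le_one (hF : InnerProdDist F s) (a b : Fin d) : ∀ᵐ x ∂F, |x a * x b| ≤ 1 :=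
  (show ∀ᵐ x ∂F, x ∈ s from hF.2.1).mono fun x hx =>
    (abs_mul_le_dotProduct_self x a b).trans (hF.2.2 x hx x hx).2

lemma integrable_mul (hF : InnerProdDist F s) (a b : Fin d) :
    Integrable (fun x => x a * x b) F :=
  have := hF.1
  Integrable.of_bound (by fun_prop) 1
    ((hF.ae_abs_mul_le_one a b).mono fun x hx => by simpa using hx)

lemma dotProduct_smm_mulVec (hF : InnerProdDist F s) (v : Fin d → ℝ) :
    v ⬝ᵥ smm F *ᵥ v = ∫ x, (v ⬝ᵥ x) ^ 2 ∂F := by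
  have hint : ∀ a b, Integrable (fun x : Fin d → ℝ => v a * v b * (x a * x b)) F := fun a b =>
    (hF.integrable_mul a b).const_mul _
  calc v ⬝ᵥ smm F *ᵥ v = ∑ a, ∑ b, ∫ x, v a * v b * (x a * x b) ∂F := by
        simp only [dotProduct, mulVec, smm, of_apply, integral_const_mul, Finset.mul_sum]
        exact Finset.sum_congr rfl fun a _ => Finset.sum_congr rfl fun b _ => by ring
    _ = ∫ x, ∑ a, ∑ b, v a * v b * (x a * x b) ∂F := by
        rw [integral_finsetSum _ fun a _ => integrable_finsetSum _ fun b _ => hint a b]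
        exact Finset.sum_congr rfl fun a _ => (integral_finsetSum _ fun b _ => hint a b).symm
    _ = ∫ x, (v ⬝ᵥ x) ^ 2 ∂F := by
        congr 1
        ext x
        simp only [sq, dotProduct, Finset.sum_mul_sum]
        exact Finset.sum_congr rfl fun a _ => Finset.sum_congr rfl fun b _ => by ring

lemma smm_posSemidef (hF : InnerProdDist F s) : (smm F).PosSemidef := by
  refine .of_dotProduct_mulVec_nonneg ?_ fun v => ?_
  · ext a b
    simp [smm, mul_comm]
  · rw [star_trivial, hF.dotProduct_smm_mulVec]
    exact integral_nonneg fun x => sq_nonneg _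

end InnerProdDist

section IIDRows

variable {Ω : Type*} [MeasurableSpace Ω] {μ : Measure Ω} {n d : ℕ} {F : Measure (Fin d → ℝ)}
  {Y : Ω → Matrix (Fin n) (Fin d) ℝ}

section

variable [IsProbabilityMeasure F]

lemma measure_forall_mem_finset_eq_prod
    (hiid : ∀ S : Fin n → Set (Fin d → ℝ), (∀ i, MeasurableSet (S i)) →
      μ {ω | ∀ i, Y ω i ∈ S i} = ∏ i, F (S i))
    (I : Finset (Fin n)) {S : Fin n → Set (Fin d → ℝ)} (hS : ∀ i ∈ I, MeasurableSet (S i)) :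
    μ {ω | ∀ i ∈ I, Y ω i ∈ S i} = ∏ i ∈ I, F (S i) := by
  classical
  have h := hiid (fun i => if i ∈ I then S i else Set.univ) fun i => by
    split_ifs with hi
    exacts [hS i hi, MeasurableSet.univ]
  convert h using 1
  · congr 1
    ext ω
    refine forall_congr' fun i => ?_
    split_ifs with hi <;> simp [hi]
  · rw [← Fintype.prod_ite_mem]
    exact Finset.prod_congr rfl fun i _ => by split_ifs <;> simp

lemma measure_preimage_row_eq
    (hiid : ∀ S : Fin n → Set (Fin d → ℝ), (∀ i, MeasurableSet (S i)) →
      μ {ω | ∀ i, Y ω i ∈ S i} = ∏ i, F (S i))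
    (i : Fin n) {A : Set (Fin d → ℝ)} (hA : MeasurableSet A) :
    μ ((fun ω => Y ω i) ⁻¹' A) = F A := by
  simpa [Set.preimage] using
    measure_forall_mem_finset_eq_prod hiid {i} (S := fun _ => A) (by simpa using hA)

lemma iIndepFun_rows
    (hiid : ∀ S : Fin n → Set (Fin d → ℝ), (∀ i, MeasurableSet (S i)) →
      μ {ω | ∀ i, Y ω i ∈ S i} = ∏ i, F (S i)) :
    iIndepFun (fun i ω => Y ω i) μ := by
  rw [iIndepFun_iff_measure_inter_preimage_eq_mul]
  intro I S hS
  have hinter : ⋂ i ∈ I, (fun ω => Y ω i) ⁻¹' S i = {ω | ∀ i ∈ I, Y ω i ∈ S i} := by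
    ext
    simp
  rw [hinter, measure_forall_mem_finset_eq_prod hiid I hS]
  exact Finset.prod_congr rfl fun i hi => (measure_preimage_row_eq hiid i (hS i hi)).symm

end

variable [IsProbabilityMeasure μ] {s : Set (Fin d → ℝ)}

lemma measure_abs_transpose_mul_self_sub_gt_le (hF : InnerProdDist F s)
    (hmeas : ∀ i, Measurable fun ω => Y ω i)
    (hiid : ∀ S : Fin n → Set (Fin d → ℝ), (∀ i, MeasurableSet (S i)) →
      μ {ω | ∀ i, Y ω i ∈ S i} = ∏ i, F (S i))
    (a b : Fin d) {u : ℝ} (hu : 0 ≤ u) :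
    μ {ω | u < |((Y ω)ᵀ * Y ω) a b - n * smm F a b|} ≤
      ENNReal.ofReal (2 * Real.exp (-u ^ 2 / (2 * n))) := by
  have := hF.1
  set Z : Fin n → Ω → ℝ := fun i ω => Y ω i a * Y ω i b
  have hmap : ∀ i, μ.map (fun ω => Y ω i) = F := fun i => Measure.ext fun A hA => by
    rw [Measure.map_apply (hmeas i) hA, measure_preimage_row_eq hiid i hA]
  have hZb : ∀ i, ∀ᵐ ω ∂μ, |Z i ω| ≤ 1 := fun i =>
    ae_of_ae_map (hmeas i).aemeasurable (by rw [hmap i]; exact hF.ae_abs_mul_le_one a b)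
  have hZint : ∀ i, μ[Z i] = smm F a b := fun i => by
    rw [smm, of_apply, ← hmap i, integral_map (hmeas i).aemeasurable (by fun_prop)]
  have hind : iIndepFun Z μ :=
    (iIndepFun_rows hiid).comp (fun _ x => x a * x b) fun _ => by fun_prop
  have hsum : ∀ ω, ((Y ω)ᵀ * Y ω) a b - n * smm F a b = ∑ i, (Z i ω - μ[Z i]) := fun ω => by
    simp [mul_apply, hZint, Finset.sum_sub_distrib, Z]
  rw [← ofReal_measureReal (measure_ne_top μ _)]
  have hoeffding := measureReal_abs_sum_sub_integral_ge_le hind (fun i => by fun_prop) hZb hu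
  rw [Fintype.card_fin] at hoeffding
  refine ENNReal.ofReal_le_ofReal ((measureReal_mono (fun ω hω => ?_) (measure_ne_top μ _)).trans
    hoeffding)
  simp only [Set.mem_ofPred_eq, hsum] at hω ⊢
  exact hω.le

lemma measure_exists_abs_transpose_mul_self_sub_gt_le (hF : InnerProdDist F s)
    (hmeas : ∀ i, Measurable fun ω => Y ω i)
    (hiid : ∀ S : Fin n → Set (Fin d → ℝ), (∀ i, MeasurableSet (S i)) →
      μ {ω | ∀ i, Y ω i ∈ S i} = ∏ i, F (S i)) :
    μ {ω | ∃ a b, 2 * √(n * Real.log n) < |((Y ω)ᵀ * Y ω) a b - n * smm F a b|} ≤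
      ENNReal.ofReal (2 * d ^ 2 / n ^ 2) := by
  rcases Nat.eq_zero_or_pos n with rfl | hn
  · -- the bound is the junk value `2 * d ^ 2 / 0 ^ 2 = 0`, but for `n = 0` the event is empty
    simp
  have hexp : Real.exp (-(2 * √(n * Real.log n)) ^ 2 / (2 * n)) = 1 / n ^ 2 := by
    have hlog : 0 ≤ Real.log n := Real.log_nonneg (by exact_mod_cast hn)
    rw [mul_pow, Real.sq_sqrt (by positivity),
      show -(2 ^ 2 * (n * Real.log n)) / (2 * n) = -Real.log (n ^ 2) by
        rw [Real.log_pow]; field_simp; push_cast; ring,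
      Real.exp_neg, Real.exp_log (by positivity), one_div]
  calc μ {ω | ∃ a b, 2 * √(n * Real.log n) < |((Y ω)ᵀ * Y ω) a b - n * smm F a b|}
      = μ (⋃ a, ⋃ b, {ω | 2 * √(n * Real.log n) < |((Y ω)ᵀ * Y ω) a b - n * smm F a b|}) := by
        congr 1
        ext
        simp
    _ ≤ ∑ a, ∑ b, μ {ω | 2 * √(n * Real.log n) < |((Y ω)ᵀ * Y ω) a b - n * smm F a b|} :=
        (measure_iUnion_fintype_le _ _).trans
          (Finset.sum_le_sum fun a _ => measure_iUnion_fintype_le _ _)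
    _ ≤ ∑ _a : Fin d, ∑ _b : Fin d, ENNReal.ofReal (2 * (1 / n ^ 2)) := by
        gcongr with a _ b _
        rw [← hexp]
        exact measure_abs_transpose_mul_self_sub_gt_le hF hmeas hiid a b (by positivity)
    _ = ENNReal.ofReal (2 * d ^ 2 / n ^ 2) := by
        simp only [Finset.sum_const, Finset.card_univ, Fintype.card_fin, nsmul_eq_mul]
        rw [← ENNReal.ofReal_natCast, ← ENNReal.ofReal_mul (by positivity),
          ← ENNReal.ofReal_mul (by positivity)]
        congr 1
        ring

end IIDRows

/-- (Concentration and linear growth of the top eigenvalues of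
`P = XXᵀ`.)  For i.i.d. rows `X_1, …, X_n ∼ F` with rank-`d` second moment matrix
`Δ`, with probability at least `1 − 2d²/n²`:
`|λ_i(XXᵀ) − n λ_i(Δ)| ≤ 2d √(n log n)` for all `1 ≤ i ≤ d`; in particular, almost
surely `λ_i(XXᵀ) = Ω(n λ_i(Δ))` and the `d` nonzero eigenvalues of `P` grow at least
linearly in `n`. -/
theorem eigenvalue_concentration
    {Ω : Type} [MeasurableSpace Ω] (μ : Measure Ω) [IsProbabilityMeasure μ]
    (d : ℕ) (F : Measure (Fin d → ℝ)) (suppF : Set (Fin d → ℝ))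
    (hF : InnerProdDist F suppF)
    (hrank : (smm F).rank = d)
    (X : ∀ n : ℕ, Ω → Matrix (Fin n) (Fin d) ℝ)
    (hmeas : ∀ n i, Measurable fun ω => X n ω i)
    (hiid : ∀ (n : ℕ) (S : Fin n → Set (Fin d → ℝ)), (∀ i, MeasurableSet (S i)) →
      μ {ω | ∀ i, X n ω i ∈ S i} = ∏ i, F (S i)) :
    (∀ n : ℕ,
      ENNReal.ofReal (1 - 2 * d ^ 2 / (n : ℝ) ^ 2) ≤
        μ {ω | ∀ k : ℕ, 1 ≤ k → k ≤ d →
          |sval (X n ω * (X n ω)ᵀ) k - (n : ℝ) * sval (smm F) k| ≤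
            2 * d * Real.sqrt ((n : ℝ) * Real.log n)}) ∧
    (∀ᵐ ω ∂μ, ∀ k : ℕ, 1 ≤ k → k ≤ d →
      ∃ c > (0:ℝ), ∃ n₀ : ℕ, ∀ n ≥ n₀,
        c * ((n : ℝ) * sval (smm F) k) ≤ sval (X n ω * (X n ω)ᵀ) k) ∧
    (∀ᵐ ω ∂μ, ∃ c > (0:ℝ), ∃ n₀ : ℕ, ∀ n ≥ n₀, ∀ k : ℕ, 1 ≤ k → k ≤ d →
      c * (n : ℝ) ≤ sval (X n ω * (X n ω)ᵀ) k) := by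
  have hΔ := hF.smm_posSemidef
  obtain ⟨l, hl, hlΔ⟩ := exists_pos_le_sval_of_rank_eq hΔ hrank
  set Bad : ℕ → Set Ω := fun n =>
    {ω | ∃ a b, 2 * √(n * Real.log n) < |((X n ω)ᵀ * X n ω) a b - n * smm F a b|}
  have hBad : ∀ n, μ (Bad n) ≤ ENNReal.ofReal (2 * d ^ 2 / n ^ 2) := fun n =>
    measure_exists_abs_transpose_mul_self_sub_gt_le hF (hmeas n) (hiid n)
  have hgood : ∀ n ω, ω ∉ Bad n → ∀ k, 1 ≤ k → k ≤ d →
      |sval (X n ω * (X n ω)ᵀ) k - n * sval (smm F) k| ≤ 2 * d * √(n * Real.log n) := by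
    intro n ω hω k hk1 hkd
    simp only [Bad, Set.mem_ofPred_eq, not_exists, not_lt] at hω
    have := abs_sval_mul_transpose_sub_le (X n ω) hΔ hω (by omega : k - 1 < d)
    linarith
  have hlin : ∀ᵐ ω ∂μ, ∀ᶠ n : ℕ in atTop, ∀ k, 1 ≤ k → k ≤ d →
      (n : ℝ) * sval (smm F) k / 2 ≤ sval (X n ω * (X n ω)ᵀ) k := by
    filter_upwards [ae_eventually_notMem_of_measure_le_div_sq _ hBad] with ω hω
    filter_upwards [hω, eventually_mul_sqrt_mul_log_le (2 * d) (half_pos hl)]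
      with n hn hsmall k hk1 hkd
    nlinarith [abs_le.1 (hgood n ω hn k hk1 hkd), hlΔ k hk1 hkd, (n.cast_nonneg : (0 : ℝ) ≤ n)]
  refine ⟨fun n => ofReal_one_sub_le_measure (by positivity) (hBad n) (hgood n), ?_, ?_⟩
  · filter_upwards [hlin] with ω hω k hk1 hkd
    obtain ⟨n₀, hn₀⟩ := eventually_atTop.1 hω
    exact ⟨1 / 2, by norm_num, n₀, fun n hn => by linarith [hn₀ n hn k hk1 hkd]⟩
  · filter_upwards [hlin] with ω hω
    obtain ⟨n₀, hn₀⟩ := eventually_atTop.1 hω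
    refine ⟨l / 2, half_pos hl, n₀, fun n hn k hk1 hkd => ?_⟩
    nlinarith [hn₀ n hn k hk1 hkd, hlΔ k hk1 hkd, (n.cast_nonneg : (0 : ℝ) ≤ n)]

end RDPG
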